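/- Let t ≥ 3, let P be the 3-regular cylinder graph on 2m = tk vertices, namely the box product C_m □ K_2 with m ≥ 3, and let c be a coloring with t types where each color class has size exactly k. If c is an equilibrium under the difference-seeking utility U_#, then sw(c, U_#) ≥ (3t − 7)k. -/

import Mathlib

open SimpleGraph Finset

/-- The coloring obtained from `c` by swapping the colors (agents) at `u` and `v`. -/
def swapColoring {V : Type*} [DecidableEq V] {t : ℕ} (c : V → Fin t) (u v : V) : V → Fin t :=
  fun w => if w = u then c v else if w = v then c u else c w

/-- The binary utility `U_b`: 1 if some neighbor has a different type, 0 otherwise. -/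
def Ub {V : Type*} [Fintype V] (G : SimpleGraph V) [DecidableRel G.Adj]
    {t : ℕ} (c : V → Fin t) (v : V) : ℕ :=
  if ∃ w ∈ G.neighborFinset v, c w ≠ c v then 1 else 0

/-- The difference-seeking utility `U_#`: the number of neighbors of a different type. -/
def Usharp {V : Type*} [Fintype V] (G : SimpleGraph V) [DecidableRel G.Adj]
    {t : ℕ} (c : V → Fin t) (v : V) : ℕ :=
  ((G.neighborFinset v).filter fun w => c w ≠ c v).card

/-- `T_c(v)`: the set of types present in the neighborhood of `v`. -/
def typesIn {V : Type*} [Fintype V] (G : SimpleGraph V) [DecidableRel G.Adj]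
    {t : ℕ} (c : V → Fin t) (v : V) : Finset (Fin t) :=
  (G.neighborFinset v).image c

/-- The variety-seeking utility `U_τ`: the number of types other than `c v` in the
neighborhood of `v`. -/
def Utau {V : Type*} [Fintype V] (G : SimpleGraph V) [DecidableRel G.Adj]
    {t : ℕ} (c : V → Fin t) (v : V) : ℕ :=
  ((typesIn G c v).erase (c v)).card

/-- The swap of `u` and `v` is improving under utility `U`. -/
def ImprovingSwap {V : Type*} [DecidableEq V] {t : ℕ}
    (U : (V → Fin t) → V → ℕ) (c : V → Fin t) (u v : V) : Prop :=
  U c u < U (swapColoring c u v) v ∧ U c v < U (swapColoring c u v) u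

/-- `c` is an equilibrium under the utility `U`: no improving swap exists. -/
def Equilibrium {V : Type*} [DecidableEq V] {t : ℕ}
    (U : (V → Fin t) → V → ℕ) (c : V → Fin t) : Prop :=
  ∀ u v : V, c u ≠ c v → ¬ ImprovingSwap U c u v

/-- The number of monochromatic edges of `c`. -/
def monoCount {V : Type*} [Fintype V] [DecidableEq V] (G : SimpleGraph V) [DecidableRel G.Adj]
    {t : ℕ} (c : V → Fin t) : ℕ :=
  (G.edgeFinset.filter fun e => (e.map c).IsDiag).card

/-- The number of colorful edges of `c`. -/
def ceCount {V : Type*} [Fintype V] [DecidableEq V] (G : SimpleGraph V) [DecidableRel G.Adj]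
    {t : ℕ} (c : V → Fin t) : ℕ :=
  (G.edgeFinset.filter fun e => ¬ (e.map c).IsDiag).card

/-- The cycle graph on `ZMod n`: `i` adjacent to `i + 1` and `i - 1`. -/
def cycleZMod (n : ℕ) : SimpleGraph (ZMod n) := SimpleGraph.circulantGraph {1}

instance (n : ℕ) : DecidableRel (cycleZMod n).Adj := fun a b =>
  decidable_of_iff (a ≠ b ∧ (a - b = 1 ∨ b - a = 1)) (by simp [cycleZMod])

instance {α β : Type*} (G : SimpleGraph α) (H : SimpleGraph β)
    [DecidableRel G.Adj] [DecidableRel H.Adj] [DecidableEq α] [DecidableEq β] :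
    DecidableRel (G □ H).Adj := fun x y =>
  decidable_of_iff (G.Adj x.1 y.1 ∧ x.2 = y.2 ∨ H.Adj x.2 y.2 ∧ x.1 = y.1)
    (SimpleGraph.boxProd_adj).symm

/-!
Let `D v` count the neighbours of `v` of its own colour. On the 3-regular cylinder
`sw = 3 · 2m - ∑ D`, so it suffices to show `∑ D ≤ 7k`.
For `c u ≠ c v` of equal degree, swapping `u` and `v` is improving as soon as `D u` exceeds the
number of neighbours of `v` coloured `c u` and `D v` the number of neighbours of `u` coloured `c v`.
In a 3-regular equilibrium it follows that all vertices with `D ≥ 2` share one colour, and that of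
any two colours carried by vertices with `D ≥ 1`, a representative of one has a neighbour of the
other. Such a representative sees at most two foreign colours, so counting pairs shows that at
most five colours carry a vertex with `D ≥ 1`. Hence `∑ D ≤ 5k + 2k`.
-/
lemma Finset.card_le_two_mul_add_one_of_forall_mem_or_mem {α : Type*} [DecidableEq α]
    {S : Finset α} {N : α → Finset α} {d : ℕ} (hN : ∀ a ∈ S, #(N a) ≤ d)
    (hS : ∀ a ∈ S, ∀ b ∈ S, a ≠ b → b ∈ N a ∨ a ∈ N b) : #S ≤ 2 * d + 1 := by
  set E := {p ∈ S.offDiag | p.2 ∈ N p.1}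
  have hE : #E ≤ #S * d := calc
    #E ≤ #(S.biUnion fun a => (N a).image (a, ·)) := card_le_card fun p hp => by
        simp only [E, mem_filter, mem_offDiag] at hp
        exact mem_biUnion.2 ⟨p.1, hp.1.1, mem_image.2 ⟨p.2, hp.2, rfl⟩⟩
    _ ≤ ∑ a ∈ S, #((N a).image (a, ·)) := card_biUnion_le
    _ ≤ ∑ a ∈ S, d := sum_le_sum fun a ha => card_image_le.trans (hN a ha)
    _ = #S * d := by rw [sum_const, smul_eq_mul]
  have hoff : S.offDiag ⊆ E ∪ E.image Prod.swap := fun p hp => by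
    obtain ⟨ha, hb, hne⟩ := mem_offDiag.1 hp
    rcases hS _ ha _ hb hne with h | h
    · exact mem_union_left _ (mem_filter.2 ⟨hp, h⟩)
    · refine mem_union_right _ (mem_image.2 ⟨p.swap, mem_filter.2 ⟨?_, h⟩, rfl⟩)
      exact mem_offDiag.2 ⟨hb, ha, hne.symm⟩
  have hcard : #S * (#S - 1) ≤ #S * (2 * d) := calc
    #S * (#S - 1) = #S.offDiag := by rw [offDiag_card, Nat.mul_sub_one]
    _ ≤ #E + #E := (card_le_card hoff).trans <| (card_union_le _ _).trans <|
        Nat.add_le_add_left card_image_le _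
    _ ≤ #S * (2 * d) := by linarith
  rcases Nat.eq_zero_or_pos #S with h | h
  · omega
  · have := Nat.le_of_mul_le_mul_left hcard h
    omega

lemma swapColoring_comm {V : Type*} [DecidableEq V] {t : ℕ} (c : V → Fin t) (u v : V) :
    swapColoring c u v = swapColoring c v u := by
  funext w
  unfold swapColoring
  split_ifs <;> subst_vars <;> rfl

section Coloring

variable {V : Type*} [Fintype V] {G : SimpleGraph V} [DecidableRel G.Adj] {t : ℕ}
  {c : V → Fin t}

def colorDegree (G : SimpleGraph V) [DecidableRel G.Adj] (c : V → Fin t) (v : V) (β : Fin t) :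
    ℕ :=
  #{w ∈ G.neighborFinset v | c w = β}

lemma usharp_add_colorDegree_self (v : V) :
    Usharp G c v + colorDegree G c v (c v) = G.degree v := by
  rw [add_comm, Usharp, colorDegree, degree]
  exact card_filter_add_card_filter_not _

lemma sum_colorDegree (v : V) : ∑ β, colorDegree G c v β = G.degree v :=
  (card_eq_sum_card_fiberwise fun _ _ => mem_coe.2 (mem_univ _)).symm

lemma colorDegree_add_colorDegree_le (v : V) {β γ : Fin t} (h : β ≠ γ) :
    colorDegree G c v β + colorDegree G c v γ ≤ G.degree v :=
  sum_colorDegree (G := G) (c := c) v ▸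
    add_le_sum (fun _ _ => Nat.zero_le _) (mem_univ β) (mem_univ γ) h

lemma mem_typesIn_iff_colorDegree_pos {v : V} {β : Fin t} :
    β ∈ typesIn G c v ↔ 0 < colorDegree G c v β := by
  simp [typesIn, colorDegree, card_pos, filter_nonempty_iff]

lemma card_typesIn_le_degree (v : V) : #(typesIn G c v) ≤ G.degree v := card_image_le

def clusteredColors (G : SimpleGraph V) [DecidableRel G.Adj] (c : V → Fin t) (j : ℕ) :
    Finset (Fin t) :=
  image c {v | j ≤ colorDegree G c v (c v)}

lemma mem_clusteredColors {j : ℕ} {β : Fin t} :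
    β ∈ clusteredColors G c j ↔ ∃ v, j ≤ colorDegree G c v (c v) ∧ c v = β := by
  simp [clusteredColors]

lemma card_filter_color_mem {k : ℕ} (hsize : ∀ β : Fin t, #{v | c v = β} = k)
    (A : Finset (Fin t)) : #{v | c v ∈ A} = #A * k := by
  rw [← sum_card_fiberwise_eq_card_filter, sum_const_nat fun β _ => hsize β]

lemma sum_usharp_add_sum_colorDegree_self {d : ℕ} (hG : G.IsRegularOfDegree d) :
    ∑ v, Usharp G c v + ∑ v, colorDegree G c v (c v) = Fintype.card V * d := by
  simp [← sum_add_distrib, usharp_add_colorDegree_self, hG.degree_eq]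

lemma colorDegree_self_le_ite (hG : G.IsRegularOfDegree 3) (v : V) :
    colorDegree G c v (c v) ≤ (if c v ∈ clusteredColors G c 1 then 1 else 0) +
      2 * if c v ∈ clusteredColors G c 2 then 1 else 0 := by
  have hle : colorDegree G c v (c v) ≤ 3 := by
    have := usharp_add_colorDegree_self (G := G) (c := c) v
    rw [hG.degree_eq] at this
    omega
  have hmem : ∀ j, j ≤ colorDegree G c v (c v) → c v ∈ clusteredColors G c j :=
    fun j hj => mem_clusteredColors.2 ⟨v, hj, rfl⟩
  rcases Nat.lt_or_ge (colorDegree G c v (c v)) 1 with h1 | h1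
  · omega
  rcases Nat.lt_or_ge (colorDegree G c v (c v)) 2 with h2 | h2
  · simp only [hmem 1 h1, if_true]
    omega
  · simp only [hmem 1 h1, hmem 2 h2, if_true]
    omega

variable [DecidableEq V]

lemma degree_le_usharp_swapColoring_add_colorDegree {u v : V} (h : c u ≠ c v) :
    G.degree v ≤ Usharp G (swapColoring c u v) v + colorDegree G c v (c u) := by
  have hsub : {w ∈ G.neighborFinset v | ¬c w = c u} ⊆
      {w ∈ G.neighborFinset v | swapColoring c u v w ≠ swapColoring c u v v} := by
    intro w hw
    obtain ⟨hwv, hwu⟩ := mem_filter.1 hw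
    have hwv' : w ≠ v := (G.ne_of_adj ((mem_neighborFinset _ _ _).1 hwv)).symm
    have hwu' : w ≠ u := by rintro rfl; exact hwu rfl
    have huv : v ≠ u := by rintro rfl; exact h rfl
    simpa [swapColoring, hwv', hwu', huv, hwv] using hwu
  have := card_filter_add_card_filter_not (s := G.neighborFinset v) (fun w => c w = c u)
  have := card_le_card hsub
  rw [Usharp, colorDegree, degree]
  omega

end Coloring

namespace Equilibrium

variable {V : Type*} [Fintype V] [DecidableEq V] {G : SimpleGraph V} [DecidableRel G.Adj]
  {t : ℕ} {c : V → Fin t}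

lemma colorDegree_self_le_or (heq : Equilibrium (Usharp G) c) {u v : V}
    (h : c u ≠ c v) (hdeg : G.degree u = G.degree v) :
    colorDegree G c u (c u) ≤ colorDegree G c v (c u) ∨
      colorDegree G c v (c v) ≤ colorDegree G c u (c v) := by
  by_contra! hlt
  have := usharp_add_colorDegree_self (G := G) (c := c) u
  have := usharp_add_colorDegree_self (G := G) (c := c) v
  have := degree_le_usharp_swapColoring_add_colorDegree (G := G) h
  have := degree_le_usharp_swapColoring_add_colorDegree (G := G) h.symm
  rw [swapColoring_comm c v u] at this
  exact heq u v h ⟨by omega, by omega⟩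

lemma mem_typesIn_or_mem_typesIn (heq : Equilibrium (Usharp G) c) {u v : V} (h : c u ≠ c v)
    (hdeg : G.degree u = G.degree v) (hu : 0 < colorDegree G c u (c u))
    (hv : 0 < colorDegree G c v (c v)) : c u ∈ typesIn G c v ∨ c v ∈ typesIn G c u := by
  simp only [mem_typesIn_iff_colorDegree_pos]
  rcases heq.colorDegree_self_le_or h hdeg with h' | h' <;> omega

lemma eq_of_two_le_colorDegree_self (heq : Equilibrium (Usharp G) c)
    (hG : G.IsRegularOfDegree 3) {u v : V} (hu : 2 ≤ colorDegree G c u (c u))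
    (hv : 2 ≤ colorDegree G c v (c v)) : c u = c v := by
  by_contra h
  have := colorDegree_add_colorDegree_le (G := G) (c := c) v h
  have := colorDegree_add_colorDegree_le (G := G) (c := c) u (Ne.symm h)
  have := hG.degree_eq u
  have := hG.degree_eq v
  rcases heq.colorDegree_self_le_or h (by omega) with h' | h' <;> omega

lemma card_clusteredColors_one_le (heq : Equilibrium (Usharp G) c)
    (hG : G.IsRegularOfDegree 3) : #(clusteredColors G c 1) ≤ 5 := by
  -- `choose!` below needs `Nonempty V`
  cases isEmpty_or_nonempty V
  · simp [clusteredColors]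
  have hrep : ∀ β ∈ clusteredColors G c 1, ∃ v, 1 ≤ colorDegree G c v (c v) ∧ c v = β :=
    fun β hβ => mem_clusteredColors.1 hβ
  choose! rep hrep_pos hrep_color using hrep
  refine card_le_two_mul_add_one_of_forall_mem_or_mem (d := 2)
    (N := fun β => (typesIn G c (rep β)).erase β) (fun β hβ => ?_) fun β hβ γ hγ hne => ?_
  · have hself : β ∈ typesIn G c (rep β) := by
      have := hrep_pos β hβ
      rw [hrep_color β hβ] at this
      exact mem_typesIn_iff_colorDegree_pos.2 this
    have := card_typesIn_le_degree (G := G) (c := c) (rep β)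
    rw [card_erase_of_mem hself]
    rw [hG.degree_eq] at this
    omega
  · have hne' : c (rep β) ≠ c (rep γ) := by rwa [hrep_color β hβ, hrep_color γ hγ]
    have := heq.mem_typesIn_or_mem_typesIn hne' ((hG.degree_eq _).trans (hG.degree_eq _).symm)
      (hrep_pos β hβ) (hrep_pos γ hγ)
    rw [hrep_color β hβ, hrep_color γ hγ] at this
    simpa only [mem_erase, hne, hne.symm, ne_eq, not_false_eq_true, true_and] using this.symm

lemma card_clusteredColors_two_le (heq : Equilibrium (Usharp G) c)
    (hG : G.IsRegularOfDegree 3) : #(clusteredColors G c 2) ≤ 1 := by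
  refine card_le_one.2 fun β hβ γ hγ => ?_
  obtain ⟨u, hu, rfl⟩ := mem_clusteredColors.1 hβ
  obtain ⟨v, hv, rfl⟩ := mem_clusteredColors.1 hγ
  exact heq.eq_of_two_le_colorDegree_self hG hu hv

lemma sum_colorDegree_self_le (heq : Equilibrium (Usharp G) c) (hG : G.IsRegularOfDegree 3)
    {k : ℕ} (hsize : ∀ β : Fin t, #{v | c v = β} = k) :
    ∑ v, colorDegree G c v (c v) ≤ 7 * k := calc
  ∑ v, colorDegree G c v (c v)
      ≤ ∑ v, ((if c v ∈ clusteredColors G c 1 then 1 else 0) +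
          2 * if c v ∈ clusteredColors G c 2 then 1 else 0) :=
        sum_le_sum fun v _ => colorDegree_self_le_ite hG v
  _ = #(clusteredColors G c 1) * k + 2 * (#(clusteredColors G c 2) * k) := by
        rw [sum_add_distrib, ← mul_sum, sum_boole, sum_boole, card_filter_color_mem hsize,
          card_filter_color_mem hsize]
        rfl
  _ ≤ 5 * k + 2 * (1 * k) := by
        gcongr
        · exact heq.card_clusteredColors_one_le hG
        · exact heq.card_clusteredColors_two_le hG
  _ = 7 * k := by ring

lemma three_mul_card_le_sum_usharp_add (heq : Equilibrium (Usharp G) c)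
    (hG : G.IsRegularOfDegree 3) {k : ℕ} (hsize : ∀ β : Fin t, #{v | c v = β} = k) :
    3 * Fintype.card V ≤ ∑ v, Usharp G c v + 7 * k := by
  have := sum_usharp_add_sum_colorDegree_self (c := c) hG
  have := heq.sum_colorDegree_self_le hG hsize
  omega

end Equilibrium

lemma cycleZMod_isRegularOfDegree_two {m : ℕ} [NeZero m] (hm : 3 ≤ m) :
    (cycleZMod m).IsRegularOfDegree 2 := by
  have hone : (1 : ZMod m) ≠ 0 := by
    have : Fact (1 < m) := ⟨by omega⟩
    exact one_ne_zero
  have htwo : (2 : ZMod m) ≠ 0 := by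
    intro h
    have := (ZMod.natCast_eq_zero_iff 2 m).1 (by exact_mod_cast h)
    have := Nat.le_of_dvd two_pos this
    omega
  intro v
  have hN : (cycleZMod m).neighborFinset v = {v - 1, v + 1} := by
    ext w
    rw [mem_neighborFinset]
    simp only [cycleZMod, circulantGraph_adj, Set.mem_singleton_iff, mem_insert, mem_singleton]
    constructor
    · rintro ⟨-, h | h⟩
      · left; linear_combination -h
      · right; linear_combination h
    · rintro (rfl | rfl)
      · exact ⟨fun h => hone (by linear_combination h), Or.inl (by ring)⟩
      · exact ⟨fun h => hone (by linear_combination -h), Or.inr (by ring)⟩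
  rw [degree, hN, card_pair fun h => htwo (by linear_combination -h)]

lemma cylinder_isRegularOfDegree_three {m : ℕ} [NeZero m] (hm : 3 ≤ m) :
    (cycleZMod m □ (⊤ : SimpleGraph (Fin 2))).IsRegularOfDegree 3 := by
  intro x
  rw [degree_boxProd, (cycleZMod_isRegularOfDegree_two hm).degree_eq]
  simp

theorem stmt16_general (t k m : ℕ) (hm : 3 ≤ m) (hn : 2 * m = t * k) [NeZero m]
    (c : ZMod m × Fin 2 → Fin t)
    (hsize : ∀ i : Fin t,
      ((Finset.univ : Finset (ZMod m × Fin 2)).filter fun v => c v = i).card = k)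
    (heq : Equilibrium (Usharp (cycleZMod m □ (⊤ : SimpleGraph (Fin 2)))) c) :
    (3 * (t : ℤ) - 7) * (k : ℤ) ≤
      (↑(∑ v, Usharp (cycleZMod m □ (⊤ : SimpleGraph (Fin 2))) c v) : ℤ) := by
  -- `convert` bridges two `LocallyFinite` instances on the box product: Mathlib's
  -- `boxProdFintypeNeighborSet` and the one induced by the `DecidableRel` instance.
  have h := heq.three_mul_card_le_sum_usharp_add
    (fun x => by convert cylinder_isRegularOfDegree_three hm x) hsize
  rw [Fintype.card_prod, ZMod.card, Fintype.card_fin] at h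
  zify at h hn
  push_cast
  linarith

theorem stmt16 (t k m : ℕ) (ht : 3 ≤ t) (hm : 3 ≤ m) (hn : 2 * m = t * k) [NeZero m]
    (c : ZMod m × Fin 2 → Fin t)
    (hsize : ∀ i : Fin t,
      ((Finset.univ : Finset (ZMod m × Fin 2)).filter fun v => c v = i).card = k)
    (heq : Equilibrium (Usharp (cycleZMod m □ (⊤ : SimpleGraph (Fin 2)))) c) :
    (3 * (t : ℤ) - 7) * (k : ℤ) ≤
      (↑(∑ v, Usharp (cycleZMod m □ (⊤ : SimpleGraph (Fin 2))) c v) : ℤ) :=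
  stmt16_general t k m hm hn c hsize heq
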